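/- Let X = {x₁,...,x_m} be a unit-norm frame for R^n whose frame operator has largest eigenvalue λ with multiplicity k (so λ > 1 when m > n). Then there exist unit vectors y₁,...,y_m in R^{m-k} such that ⟨yᵢ,yⱼ⟩ = (1/(1-λ))⟨xᵢ,xⱼ⟩ for all i ≠ j. Consequently, if X has coherence α, then α ≥ (λ-1)·√(k/((m-k)(m-1))). -/

import Mathlib

open scoped RealInnerProductSpace
abbrev E (n : ℕ) := EuclideanSpace ℝ (Fin n)
noncomputable def cohF {n m : ℕ} (x : Fin m → E n) : ℝ :=
  sSup {r : ℝ | ∃ i j : Fin m, i ≠ j ∧ r = |⟪x i, x j⟫|}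

/-!
Write `V c = ∑ cᵢ xᵢ` for the synthesis map and `A = V*` for the analysis map, so that the
frame operator is `S = V A` and the Gram matrix is `G = A V`. Since `trace S = ∑ ‖xᵢ‖² = m > n`,
the top eigenvalue satisfies `λ > 1`, and `G ≤ λ I` because `‖V c‖⁴ ≤ ‖c‖² ⟪V c, S V c⟫`.
Hence `(λ - 1)⁻¹ (λ I - G)` is positive semidefinite, with unit diagonal, off-diagonal entries
`⟪xᵢ, xⱼ⟫ / (1 - λ)`, and kernel the `λ`-eigenspace of `G = A V`, which is isomorphic to the
`λ`-eigenspace of `S = V A` and so has dimension `k`. It is therefore the Gram matrix of unit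
vectors `y₁, …, y_m` in `ℝ^(m-k)`, and the Welch bound for these transfers to the coherence of `X`.
-/

open Module Matrix

theorem LinearMap.IsSymmetric.inner_map_self_le_of_forall_hasEigenvalue_le {F : Type*}
    [NormedAddCommGroup F] [InnerProductSpace ℝ F] [FiniteDimensional ℝ F] {T : F →ₗ[ℝ] F}
    (hT : T.IsSymmetric) {lam : ℝ} (hlam : ∀ μ, End.HasEigenvalue T μ → μ ≤ lam) (u : F) :
    ⟪u, T u⟫ ≤ lam * ‖u‖ ^ 2 := by
  set b := hT.eigenvectorBasis rfl
  calc ⟪u, T u⟫ = ∑ j, hT.eigenvalues rfl j * ⟪b j, u⟫ ^ 2 := by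
        rw [← b.sum_inner_mul_inner u (T u)]
        refine Finset.sum_congr rfl fun j _ => ?_
        rw [← hT (b j) u, hT.apply_eigenvectorBasis, real_inner_smul_left,
          real_inner_comm u (b j)]
        simp only [RCLike.ofReal_real_eq_id, id_eq]
        ring
    _ ≤ ∑ j, lam * ⟪b j, u⟫ ^ 2 := by
        gcongr with j
        exact hlam _ (hT.hasEigenvalue_eigenvalues rfl j)
    _ = lam * ‖u‖ ^ 2 := by rw [← Finset.mul_sum, b.sum_sq_inner_right]

namespace Module.End

variable {K V W : Type*} [Field K] [AddCommGroup V] [Module K V] [AddCommGroup W] [Module K W]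

theorem finrank_eigenspace_comp_le [FiniteDimensional K W] (f : V →ₗ[K] W) (g : W →ₗ[K] V)
    {μ : K} (hμ : μ ≠ 0) :
    finrank K (eigenspace (g ∘ₗ f) μ) ≤ finrank K (eigenspace (f ∘ₗ g) μ) := by
  refine LinearMap.finrank_le_finrank_of_injective (f := f.restrict fun v hv => ?_) ?_
  · rw [mem_eigenspace_iff] at hv ⊢
    rw [LinearMap.comp_apply, ← LinearMap.comp_apply g f, hv, map_smul]
  · rw [← LinearMap.ker_eq_bot, LinearMap.ker_eq_bot']
    rintro ⟨v, hv⟩ hfv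
    have hfv : f v = 0 := congrArg Subtype.val hfv
    rw [mem_eigenspace_iff, LinearMap.comp_apply, hfv, map_zero, eq_comm, smul_eq_zero] at hv
    exact Subtype.ext (hv.resolve_left hμ)

theorem finrank_eigenspace_comp_comm [FiniteDimensional K V] [FiniteDimensional K W]
    (f : V →ₗ[K] W) (g : W →ₗ[K] V) {μ : K} (hμ : μ ≠ 0) :
    finrank K (eigenspace (g ∘ₗ f) μ) = finrank K (eigenspace (f ∘ₗ g) μ) :=
  (finrank_eigenspace_comp_le f g hμ).antisymm (finrank_eigenspace_comp_le g f hμ)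

end Module.End

section Frame

variable {ι F : Type*} [Fintype ι] [NormedAddCommGroup F] [InnerProductSpace ℝ F] (x : ι → F)

noncomputable def analysisOp : F →ₗ[ℝ] ι → ℝ := LinearMap.pi fun i => innerₗ F (x i)

noncomputable def frameOperator : F →ₗ[ℝ] F := Fintype.linearCombination ℝ x ∘ₗ analysisOp x

theorem frameOperator_apply (v : F) : frameOperator x v = ∑ i, ⟪x i, v⟫ • x i := by
  simp [frameOperator, analysisOp, Fintype.linearCombination_apply]

theorem analysisOp_comp_linearCombination :
    analysisOp x ∘ₗ Fintype.linearCombination ℝ x = (gram ℝ x).mulVecLin := by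
  ext c i
  simp [analysisOp, Fintype.linearCombination_apply, mulVec, dotProduct, gram_apply, mul_comm]

theorem inner_frameOperator_self (u : F) : ⟪u, frameOperator x u⟫ = ∑ i, ⟪x i, u⟫ ^ 2 := by
  simp [frameOperator_apply, inner_sum, real_inner_smul_right, real_inner_comm u, sq]

theorem isSymmetric_frameOperator : (frameOperator x).IsSymmetric := fun u v => by
  simp only [frameOperator_apply, sum_inner, inner_sum, real_inner_smul_left,
    real_inner_smul_right, real_inner_comm u, mul_comm]

theorem sum_norm_sq_eq_sum_inner_frameOperator {κ : Type*} [Fintype κ]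
    (b : OrthonormalBasis κ ℝ F) :
    ∑ i, ‖x i‖ ^ 2 = ∑ j, ⟪b j, frameOperator x (b j)⟫ := by
  simp_rw [inner_frameOperator_self, ← b.sum_sq_inner_left]
  exact Finset.sum_comm

theorem dotProduct_gram_mulVec_le {lam : ℝ} (hlam₀ : 0 ≤ lam)
    (hlam : ∀ u, ⟪u, frameOperator x u⟫ ≤ lam * ‖u‖ ^ 2) (c : ι → ℝ) :
    c ⬝ᵥ gram ℝ x *ᵥ c ≤ lam * (c ⬝ᵥ c) := by
  set w := ∑ i, c i • x i
  have hw : c ⬝ᵥ gram ℝ x *ᵥ c = ‖w‖ ^ 2 := by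
    rw [← real_inner_self_eq_norm_sq, ← star_dotProduct_gram_mulVec, star_trivial]
  have hcc : c ⬝ᵥ c = ∑ i, c i ^ 2 := by simp [dotProduct, sq]
  have hcs : (‖w‖ ^ 2) ^ 2 ≤ (c ⬝ᵥ c) * (lam * ‖w‖ ^ 2) := by
    calc (‖w‖ ^ 2) ^ 2 = (∑ i, c i * ⟪x i, w⟫) ^ 2 := by
          simp only [w, ← real_inner_self_eq_norm_sq, sum_inner, real_inner_smul_left]
      _ ≤ (∑ i, c i ^ 2) * ∑ i, ⟪x i, w⟫ ^ 2 := Finset.sum_mul_sq_le_sq_mul_sq _ _ _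
      _ ≤ (c ⬝ᵥ c) * (lam * ‖w‖ ^ 2) := by
          rw [hcc, ← inner_frameOperator_self]
          exact mul_le_mul_of_nonneg_left (hlam w) (by positivity)
  rw [hw]
  rcases (sq_nonneg ‖w‖).eq_or_lt with h | h
  · rw [← h]
    exact mul_nonneg hlam₀ (hcc ▸ by positivity)
  · nlinarith

theorem posSemidef_smul_one_sub_gram [DecidableEq ι] {lam : ℝ} (hlam₀ : 0 ≤ lam)
    (hlam : ∀ u, ⟪u, frameOperator x u⟫ ≤ lam * ‖u‖ ^ 2) :
    (lam • 1 - gram ℝ x).PosSemidef := by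
  refine .of_dotProduct_mulVec_nonneg ?_ fun c => ?_
  · exact (isHermitian_one.smul (.all lam)).sub (isHermitian_gram ℝ x)
  · simp only [star_trivial, sub_mulVec, smul_mulVec, one_mulVec, dotProduct_sub,
      dotProduct_smul, smul_eq_mul, sub_nonneg]
    exact dotProduct_gram_mulVec_le x hlam₀ hlam c

theorem finrank_ker_smul_one_sub_gram [FiniteDimensional ℝ F] [DecidableEq ι] {μ : ℝ}
    (hμ : μ ≠ 0) :
    finrank ℝ (LinearMap.ker (μ • 1 - gram ℝ x).mulVecLin) =
      finrank ℝ (End.eigenspace (frameOperator x) μ) := by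
  have hker : LinearMap.ker (μ • 1 - gram ℝ x).mulVecLin =
      End.eigenspace (analysisOp x ∘ₗ Fintype.linearCombination ℝ x) μ := by
    ext c
    simp [analysisOp_comp_linearCombination, sub_eq_zero, eq_comm]
  rw [hker, End.finrank_eigenspace_comp_comm _ _ hμ]
  rfl

end Frame

section GramRealization

variable {ι F : Type*} [Fintype ι] [NormedAddCommGroup F] [InnerProductSpace ℝ F]

theorem exists_euclidean_inner_eq (v : ι → F) {r : ℕ}
    (hr : finrank ℝ (Submodule.span ℝ (Set.range v)) = r) :
    ∃ y : ι → E r, ∀ i j, ⟪y i, y j⟫ = ⟪v i, v j⟫ := by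
  have := FiniteDimensional.span_of_finite ℝ (Set.finite_range v)
  let b := (stdOrthonormalBasis ℝ (Submodule.span ℝ (Set.range v))).reindex (finCongr hr)
  refine ⟨fun i => b.repr ⟨v i, Submodule.subset_span (Set.mem_range_self i)⟩, fun i j => ?_⟩
  rw [LinearIsometryEquiv.inner_map_map]
  rfl

open scoped MatrixOrder in
theorem Matrix.PosSemidef.exists_euclidean_inner_eq [DecidableEq ι] {M : Matrix ι ι ℝ}
    (hM : M.PosSemidef) {r : ℕ} (hr : M.rank = r) :
    ∃ y : ι → E r, ∀ i j, ⟪y i, y j⟫ = M i j := by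
  obtain ⟨B, rfl⟩ := CStarAlgebra.nonneg_iff_eq_star_mul_self.mp hM.nonneg
  let v : ι → EuclideanSpace ℝ ι := (WithLp.linearEquiv 2 ℝ (ι → ℝ)).symm ∘ B.col
  have hv : finrank ℝ (Submodule.span ℝ (Set.range v)) = r := by
    rw [← hr, star_eq_conjTranspose, rank_conjTranspose_mul_self, rank_eq_finrank_span_cols,
      Set.range_comp, Submodule.span_image_linearEquiv, LinearEquiv.finrank_map_eq]
  obtain ⟨y, hy⟩ := _root_.exists_euclidean_inner_eq v hv
  refine ⟨y, fun i j => ?_⟩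
  simp [hy, v, mul_apply, EuclideanSpace.inner_eq_star_dotProduct, dotProduct, mul_comm]

end GramRealization

section Welch

variable {ι : Type*} [Fintype ι] {r : ℕ}

/-- With `T a b = ∑ᵢ yᵢ(a) yᵢ(b)` the frame operator of `y` in coordinates, this is
`(trace T)² ≤ r ∑_a (T a a)² ≤ r ∑_{a,b} (T a b)² = r ∑_{i,j} ⟪yᵢ, yⱼ⟫²`. -/
theorem sq_sum_norm_sq_le_mul_sum_inner_sq (y : ι → E r) :
    (∑ i, ‖y i‖ ^ 2) ^ 2 ≤ r * ∑ i, ∑ j, ⟪y i, y j⟫ ^ 2 := by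
  set T : Fin r → Fin r → ℝ := fun a b => ∑ i, y i a * y i b
  have htrace : ∑ i, ‖y i‖ ^ 2 = ∑ a, T a a := by
    simp only [EuclideanSpace.norm_sq_eq, Real.norm_eq_abs, sq_abs]
    simp only [T, sq]
    exact Finset.sum_comm
  have hfrob : ∑ i, ∑ j, ⟪y i, y j⟫ ^ 2 = ∑ a, ∑ b, T a b ^ 2 := by
    simp only [T, PiLp.inner_apply, RCLike.inner_apply, conj_trivial, sq, Finset.sum_mul_sum]
    simp only [Finset.sum_comm (s := (Finset.univ : Finset ι))
      (t := (Finset.univ : Finset (Fin r)))]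
    refine Fintype.sum_congr _ _ fun a => Fintype.sum_congr _ _ fun b =>
      Fintype.sum_congr _ _ fun i => Fintype.sum_congr _ _ fun j => by ring
  rw [htrace, hfrob]
  calc (∑ a, T a a) ^ 2 ≤ r * ∑ a, T a a ^ 2 := by
        simpa using sq_sum_le_card_mul_sum_sq (s := Finset.univ) (f := fun a => T a a)
    _ ≤ r * ∑ a, ∑ b, T a b ^ 2 := by
        gcongr with a
        exact Finset.single_le_sum (fun b _ => sq_nonneg (T a b)) (Finset.mem_univ a)

theorem exists_welch_le_inner_sq (y : ι → E r) (hy : ∀ i, ‖y i‖ = 1) (hr : 0 < r)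
    (hι : 2 ≤ Fintype.card ι) :
    ∃ i j, i ≠ j ∧
      ((Fintype.card ι : ℝ) - r) / (r * ((Fintype.card ι : ℝ) - 1)) ≤ ⟪y i, y j⟫ ^ 2 := by
  classical
  set m := Fintype.card ι
  set c := ((m : ℝ) - r) / (r * ((m : ℝ) - 1))
  have : Nonempty ι := Fintype.card_pos_iff.mp (by omega)
  by_contra! h
  have hrow : ∀ i, ∑ j, ⟪y i, y j⟫ ^ 2 < 1 + (m - 1) * c := by
    intro i
    have hcard : (Finset.univ.erase i).card = m - 1 :=
      Finset.card_erase_of_mem (Finset.mem_univ i)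
    have hne : (Finset.univ.erase i).Nonempty := Finset.card_pos.mp (by omega)
    have hdiag : ⟪y i, y i⟫ ^ 2 = 1 := by rw [real_inner_self_eq_norm_sq, hy]; norm_num
    rw [← Finset.add_sum_erase _ _ (Finset.mem_univ i), hdiag]
    calc 1 + ∑ j ∈ Finset.univ.erase i, ⟪y i, y j⟫ ^ 2
        < 1 + ∑ j ∈ Finset.univ.erase i, c := (add_lt_add_iff_left 1).mpr
          (Finset.sum_lt_sum_of_nonempty hne fun j hj => h i j (Finset.ne_of_mem_erase hj).symm)
      _ = 1 + (m - 1) * c := by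
          rw [Finset.sum_const, hcard, nsmul_eq_mul, Nat.cast_sub (by omega), Nat.cast_one]
  have hsum : ∑ i, ∑ j, ⟪y i, y j⟫ ^ 2 < m * (1 + (m - 1) * c) := by
    calc _ < ∑ _i : ι, (1 + (m - 1) * c) :=
          Finset.sum_lt_sum_of_nonempty Finset.univ_nonempty fun i _ => hrow i
      _ = m * (1 + (m - 1) * c) := by rw [Finset.sum_const, Finset.card_univ, nsmul_eq_mul]
  have hbound := sq_sum_norm_sq_le_mul_sum_inner_sq y
  simp only [hy, one_pow, Finset.sum_const, Finset.card_univ, nsmul_eq_mul, mul_one] at hbound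
  have hm1 : (m : ℝ) - 1 ≠ 0 := by
    have : (2 : ℝ) ≤ m := by exact_mod_cast hι
    linarith
  have hr' : (0 : ℝ) < r := by exact_mod_cast hr
  have hc : (m : ℝ) * (1 + (m - 1) * c) = m ^ 2 / r := by
    simp only [c]
    field_simp
    ring
  rw [hc, lt_div_iff₀ hr'] at hsum
  linarith

end Welch

theorem abs_inner_le_cohF {n m : ℕ} (x : Fin m → E n) {i j : Fin m} (hij : i ≠ j) :
    |⟪x i, x j⟫| ≤ cohF x := by
  refine le_csSup (Set.Finite.bddAbove ?_) ⟨i, j, hij, rfl⟩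
  refine (Set.finite_range fun p : Fin m × Fin m => |⟪x p.1, x p.2⟫|).subset ?_
  rintro _ ⟨i, j, -, rfl⟩
  exact ⟨(i, j), rfl⟩

section NaimarkComplement

variable {ι F : Type*} [Fintype ι] [NormedAddCommGroup F] [InnerProductSpace ℝ F]
  [FiniteDimensional ℝ F] (x : ι → F)

theorem one_lt_of_forall_hasEigenvalue_frameOperator_le (hx : ∀ i, ‖x i‖ = 1)
    (hcard : finrank ℝ F < Fintype.card ι) {lam : ℝ}
    (hmax : ∀ μ, End.HasEigenvalue (frameOperator x) μ → μ ≤ lam) : 1 < lam := by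
  have hray := (isSymmetric_frameOperator x).inner_map_self_le_of_forall_hasEigenvalue_le hmax
  let b := stdOrthonormalBasis ℝ F
  have htrace : (Fintype.card ι : ℝ) ≤ finrank ℝ F * lam := by
    calc (Fintype.card ι : ℝ) = ∑ i, ‖x i‖ ^ 2 := by simp [hx]
      _ = ∑ j, ⟪b j, frameOperator x (b j)⟫ := sum_norm_sq_eq_sum_inner_frameOperator x b
      _ ≤ ∑ _j : Fin (finrank ℝ F), lam := by
          gcongr with j
          simpa [b.orthonormal.1 j] using hray (b j)
      _ = finrank ℝ F * lam := by simp
  by_contra! hlam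
  have : (finrank ℝ F : ℝ) * lam ≤ finrank ℝ F :=
    mul_le_of_le_one_right (Nat.cast_nonneg _) hlam
  have : (finrank ℝ F : ℝ) < Fintype.card ι := by exact_mod_cast hcard
  linarith

theorem exists_naimark_complement (hx : ∀ i, ‖x i‖ = 1) {lam : ℝ} (hlam : 1 < lam)
    (hmax : ∀ μ, End.HasEigenvalue (frameOperator x) μ → μ ≤ lam) {k r : ℕ}
    (heig : finrank ℝ (End.eigenspace (frameOperator x) lam) = k)
    (hr : Fintype.card ι - k = r) :
    ∃ y : ι → E r, (∀ i, ‖y i‖ = 1) ∧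
      ∀ i j, i ≠ j → ⟪y i, y j⟫ = (1 / (1 - lam)) * ⟪x i, x j⟫ := by
  classical
  have hlam₀ : 0 < lam := by linarith
  have hlam₁ : 0 < lam - 1 := by linarith
  set M := (lam - 1)⁻¹ • (lam • 1 - gram ℝ x)
  have hray := (isSymmetric_frameOperator x).inner_map_self_le_of_forall_hasEigenvalue_le hmax
  have hpsd : M.PosSemidef :=
    (posSemidef_smul_one_sub_gram x hlam₀.le hray).smul (inv_nonneg.2 hlam₁.le)
  have hrank : M.rank = r := by
    have hdim := LinearMap.finrank_range_add_finrank_ker (lam • 1 - gram ℝ x).mulVecLin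
    rw [Module.finrank_fintype_fun_eq_card, finrank_ker_smul_one_sub_gram x hlam₀.ne',
      heig] at hdim
    have hreg : (lam - 1)⁻¹ ∈ nonZeroDivisors ℝ :=
      mem_nonZeroDivisors_of_ne_zero (inv_pos.2 hlam₁).ne'
    rw [rank_smul_of_mem_nonZeroDivisors _ hreg, rank, ← hr, ← hdim, Nat.add_sub_cancel]
  obtain ⟨y, hy⟩ := hpsd.exists_euclidean_inner_eq hrank
  have h1 : 1 - lam ≠ 0 := by linarith
  refine ⟨y, fun i => ?_, fun i j hij => ?_⟩
  · have : ‖y i‖ ^ 2 = 1 := by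
      rw [← real_inner_self_eq_norm_sq, hy]
      simp only [M, Matrix.smul_apply, Matrix.sub_apply, one_apply_eq, smul_eq_mul, mul_one,
        gram_apply, real_inner_self_eq_norm_sq, hx, one_pow]
      field_simp
    exact (pow_eq_one_iff_of_nonneg (norm_nonneg _) two_ne_zero).mp this
  · rw [hy]
    simp only [M, Matrix.smul_apply, Matrix.sub_apply, one_apply_ne hij, smul_eq_mul, mul_zero,
      gram_apply, zero_sub, mul_neg, one_div]
    field_simp
    ring

end NaimarkComplement

theorem naimark_complement_coherence_bound_general {n m k : ℕ} (hn : 0 < n) (hm : n < m)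
    (x : Fin m → E n) (hunit : ∀ i, ‖x i‖ = 1)
    (S : Module.End ℝ (E n)) (hS : ∀ v, S v = ∑ i, ⟪x i, v⟫ • x i)
    (lam : ℝ)
    (heig : Module.finrank ℝ (Module.End.eigenspace S lam) = k)
    (hmax : ∀ μ : ℝ, S.HasEigenvalue μ → μ ≤ lam) :
    (∃ y : Fin m → E (m - k), (∀ i, ‖y i‖ = 1) ∧
      ∀ i j : Fin m, i ≠ j → ⟪y i, y j⟫ = (1 / (1 - lam)) * ⟪x i, x j⟫) ∧
    (lam - 1) * Real.sqrt ((k : ℝ) / (((m : ℝ) - k) * ((m : ℝ) - 1))) ≤ cohF x := by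
  obtain rfl : S = frameOperator x :=
    LinearMap.ext fun v => (hS v).trans (frameOperator_apply x v).symm
  have hnm : finrank ℝ (E n) < m := by rwa [finrank_euclideanSpace_fin]
  have hlam := one_lt_of_forall_hasEigenvalue_frameOperator_le x hunit
    (by rwa [Fintype.card_fin]) hmax
  have hkm : k < m := heig ▸ (Submodule.finrank_le _).trans_lt hnm
  obtain ⟨y, hy, hyx⟩ := exists_naimark_complement x hunit hlam hmax heig (r := m - k) (by simp)
  refine ⟨⟨y, hy, hyx⟩, ?_⟩
  obtain ⟨i, j, hij, hwelch⟩ :=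
    exists_welch_le_inner_sq y hy (by omega) (by rw [Fintype.card_fin]; omega)
  have hconst : (k : ℝ) / ((m - k) * (m - 1)) ≤ ⟪y i, y j⟫ ^ 2 := by
    convert hwelch using 2 <;> push_cast [Fintype.card_fin, Nat.cast_sub hkm.le] <;> ring
  calc (lam - 1) * √((k : ℝ) / ((m - k) * (m - 1)))
      ≤ (lam - 1) * |⟪y i, y j⟫| := by
        gcongr
        exact (Real.sqrt_le_sqrt hconst).trans_eq (Real.sqrt_sq_eq_abs _)
    _ = |⟪x i, x j⟫| := by
        rw [hyx i j hij, abs_mul, one_div, abs_inv, abs_of_neg (by linarith : 1 - lam < 0),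
          neg_sub, ← mul_assoc, mul_inv_cancel₀ (by linarith), one_mul]
    _ ≤ cohF x := abs_inner_le_cohF x hij

theorem naimark_complement_coherence_bound {n m k : ℕ} (hn : 0 < n) (hm : n < m)
    (x : Fin m → E n) (hunit : ∀ i, ‖x i‖ = 1)
    (hspan : Submodule.span ℝ (Set.range x) = ⊤)
    (S : Module.End ℝ (E n)) (hS : ∀ v, S v = ∑ i, ⟪x i, v⟫ • x i)
    (lam : ℝ) (hk : 0 < k)
    (heig : Module.finrank ℝ (Module.End.eigenspace S lam) = k)
    (hmax : ∀ μ : ℝ, S.HasEigenvalue μ → μ ≤ lam) :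
    (∃ y : Fin m → E (m - k), (∀ i, ‖y i‖ = 1) ∧
      ∀ i j : Fin m, i ≠ j → ⟪y i, y j⟫ = (1 / (1 - lam)) * ⟪x i, x j⟫) ∧
    (lam - 1) * Real.sqrt ((k : ℝ) / (((m : ℝ) - k) * ((m : ℝ) - 1))) ≤ cohF x :=
  naimark_complement_coherence_bound_general hn hm x hunit S hS lam heig hmax
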